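/- Let G be a finite group, i ≥ 4, with V_i < G_i, G'/V_i abelian, and G_{i-1} satisfying H_1. Then D_{i-1} ≤ D_i, where D_j/V_j = C_{G/V_j}(G_{j-1}/V_j). -/

import Mathlib

open Subgroup
open scoped Pointwise
open scoped commutatorElement

/-- The vanishing-off subgroup `V(G)`: generated by all `g` at which some
nonlinear irreducible character does not vanish. -/
def vanishingOff (G : Type) [Group G] : Subgroup G :=
  Subgroup.closure {g | ∃ V : FDRep ℂ G, CategoryTheory.Simple V ∧
    1 < Module.finrank ℂ V ∧ FDRep.character V g ≠ 0}

instance vanishingOff_normal (G : Type) [Group G] : (vanishingOff G).Normal := by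
  constructor
  intro n hn g
  have hset : ∀ x ∈ {g | ∃ V : FDRep ℂ G, CategoryTheory.Simple V ∧
      1 < Module.finrank ℂ V ∧ FDRep.character V g ≠ 0}, ∀ h : G,
      h * x * h⁻¹ ∈ vanishingOff G := by
    intro x hx h
    apply Subgroup.subset_closure
    obtain ⟨V, h1, h2, h3⟩ := hx
    exact ⟨V, h1, h2, by rwa [FDRep.char_conj]⟩
  induction hn using Subgroup.closure_induction with
  | mem x hx => exact hset x hx g
  | one => simpa using (vanishingOff G).one_mem
  | mul x y _ _ hx hy =>
      have : g * (x * y) * g⁻¹ = (g * x * g⁻¹) * (g * y * g⁻¹) := by group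
      rw [this]; exact mul_mem hx hy
  | inv x _ hx =>
      have : g * x⁻¹ * g⁻¹ = (g * x * g⁻¹)⁻¹ := by group
      rw [this]; exact inv_mem hx

/-- `paperV G i` is `V_i` : `V_1 = V(G)`, `V_i = [V_{i-1}, G]`. -/
def paperV (G : Type) [Group G] : ℕ → Subgroup G
  | 0 => ⊤
  | 1 => vanishingOff G
  | (n+2) => ⁅paperV G (n+1), (⊤ : Subgroup G)⁆

instance paperV_normal (G : Type) [Group G] (i : ℕ) : (paperV G i).Normal := by
  induction i with
  | zero => exact inferInstanceAs (⊤ : Subgroup G).Normal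
  | succ n ih =>
    match n, ih with
    | 0, _ => exact inferInstanceAs (vanishingOff G).Normal
    | (m+1), ih => exact Subgroup.commutator_normal _ _

/-- `paperLCS G i` is `G_i`, the `i`-th term of the lower central series with
the paper's indexing: `G_1 = G`, `G_{i+1} = [G_i, G]`. -/
def paperLCS (G : Type) [Group G] (i : ℕ) : Subgroup G := Subgroup.lowerCentralSeries (⊤ : Subgroup G) (i - 1)

instance paperLCS_normal (G : Type) [Group G] (i : ℕ) : (paperLCS G i).Normal :=
  Subgroup.lowerCentralSeries_normal _ _

/-- `Y_i`, defined by `Y_i/V_i = Z(G/V_i)`. -/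
def paperY (G : Type) [Group G] (i : ℕ) : Subgroup G :=
  (Subgroup.center (G ⧸ paperV G i)).comap (QuotientGroup.mk' (paperV G i))

instance paperY_normal (G : Type) [Group G] (i : ℕ) : (paperY G i).Normal :=
  Subgroup.Normal.comap inferInstance _

/-- `D_i`, defined by `D_i/V_i = C_{G/V_i}(G_{i-1}/V_i)`. -/
def paperD (G : Type) [Group G] (i : ℕ) : Subgroup G :=
  (Subgroup.centralizer (((paperLCS G (i-1)).map (QuotientGroup.mk' (paperV G i))) :
      Set (G ⧸ paperV G i))).comap (QuotientGroup.mk' (paperV G i))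

instance paperLCSinfY_normal (G : Type) [Group G] (i j : ℕ) :
    (paperLCS G i ⊓ paperY G j).Normal := Subgroup.normal_inf_normal _ _

/-- `E_i`, defined by `E_i/(G_{i-1} ∩ Y_i) = C_{G/(G_{i-1} ∩ Y_i)}(G_{i-2}/(G_{i-1} ∩ Y_i))`. -/
def paperE (G : Type) [Group G] (i : ℕ) : Subgroup G :=
  (Subgroup.centralizer (((paperLCS G (i-2)).map
      (QuotientGroup.mk' (paperLCS G (i-1) ⊓ paperY G i))) :
      Set (G ⧸ (paperLCS G (i-1) ⊓ paperY G i)))).comap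
    (QuotientGroup.mk' (paperLCS G (i-1) ⊓ paperY G i))

/-- `G_i` is `H_1`: for every normal `N` with `V_i ≤ N < G_i`,
`V_{i-1}/N = (G_{i-1}/N) ∩ Z(G/N)`. -/
def IsH1 (G : Type) [Group G] (i : ℕ) : Prop :=
  ∀ (N : Subgroup G) (hN : N.Normal), paperV G i ≤ N → N < paperLCS G i →
    letI := hN
    (paperV G (i-1)).map (QuotientGroup.mk' N) =
      (paperLCS G (i-1)).map (QuotientGroup.mk' N) ⊓ Subgroup.center (G ⧸ N)

private lemma keyIdent' {H : Type} [Group H] (z w x y : H)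
    (hzc : ∀ q, z * q = q * z) (hxw : x * w = w * x)
    (hw : w * ⁅x, y⁆ = ⁅x, y⁆ * w) :
    ⁅z * x, w * y⁆ = ⁅x, y⁆ := by
  have h1 : ⁅z * x, w * y⁆ = ⁅x, w * y⁆ := by
    have hc : z * (x * (w * y) * x⁻¹) * z⁻¹ = x * (w * y) * x⁻¹ := by
      rw [hzc (x * (w * y) * x⁻¹)]; group
    calc ⁅z * x, w * y⁆ = z * (x * (w * y) * x⁻¹) * z⁻¹ * (w * y)⁻¹ := by group
      _ = x * (w * y) * x⁻¹ * (w * y)⁻¹ := by rw [hc]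
      _ = ⁅x, w * y⁆ := by group
  have h2 : ⁅x, w * y⁆ = w * ⁅x, y⁆ * w⁻¹ := by
    calc ⁅x, w * y⁆ = x * w * (y * x⁻¹ * y⁻¹ * w⁻¹) := by group
      _ = w * x * (y * x⁻¹ * y⁻¹ * w⁻¹) := by rw [hxw]
      _ = w * ⁅x, y⁆ * w⁻¹ := by group
  rw [h1, h2, hw]; group

private lemma keyCommute' {H : Type} [Group H] (d x y : H)
    (hzc : ∀ q, ⁅d, x⁆ * q = q * ⁅d, x⁆)
    (hxw : x * ⁅d, y⁆ = ⁅d, y⁆ * x)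
    (hw : ⁅d, y⁆ * ⁅x, y⁆ = ⁅x, y⁆ * ⁅d, y⁆) :
    d * ⁅x, y⁆ = ⁅x, y⁆ * d := by
  have key : d * ⁅x, y⁆ * d⁻¹ = ⁅⁅d, x⁆ * x, ⁅d, y⁆ * y⁆ := by
    have hx : d * x * d⁻¹ = ⁅d, x⁆ * x := by group
    have hy : d * y * d⁻¹ = ⁅d, y⁆ * y := by group
    rw [← hx, ← hy]; group
  have h := key.trans (keyIdent' _ _ _ _ hzc hxw hw)
  calc d * ⁅x, y⁆ = d * ⁅x, y⁆ * d⁻¹ * d := by group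
    _ = ⁅x, y⁆ * d := by rw [h]

theorem stmt10 (G : Type) [Group G] [Finite G] (i : ℕ) (hi : 4 ≤ i)
    (hlt : paperV G i < paperLCS G i)
    (hab : ∀ x ∈ commutator G, ∀ y ∈ commutator G, ⁅x, y⁆ ∈ paperV G i)
    (hH1 : IsH1 G (i-1)) :
    paperD G (i-1) ≤ paperD G i := by
  obtain ⟨k, rfl⟩ : ∃ k, i = k + 4 := ⟨i - 4, by omega⟩
  intro d hd
  -- notation
  set V : Subgroup G := paperV G (k + 4) with hV
  set f : G →* G ⧸ V := QuotientGroup.mk' V with hf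
  -- membership in V via f
  have hker : ∀ g : G, f g = 1 → True := fun _ _ => trivial
  have hmem_one : ∀ g : G, g ∈ V → f g = 1 := by
    intro g hg
    rw [← QuotientGroup.ker_mk' V] at hg
    exact hg
  -- Step A: d centralizes lowerCentralSeries G (k+1) mod paperV G (k+3)
  have hcent : ∀ x ∈ (⊤ : Subgroup G).lowerCentralSeries (k + 1), ⁅d, x⁆ ∈ paperV G (k + 3) := by
    intro x hx
    have hd' : QuotientGroup.mk' (paperV G (k + 3)) d ∈
        Subgroup.centralizer (((paperLCS G (k + 2)).map
          (QuotientGroup.mk' (paperV G (k + 3)))) : Set (G ⧸ paperV G (k + 3))) :=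
      Subgroup.mem_comap.mp hd
    have hxS : QuotientGroup.mk' (paperV G (k + 3)) x ∈
        ((paperLCS G (k + 2)).map (QuotientGroup.mk' (paperV G (k + 3)))) :=
      Subgroup.mem_map_of_mem _ (by exact hx)
    have hcomm := Subgroup.mem_centralizer_iff.mp hd' _ hxS
    have h1 : ⁅QuotientGroup.mk' (paperV G (k + 3)) d,
        QuotientGroup.mk' (paperV G (k + 3)) x⁆ = 1 :=
      commutatorElement_eq_one_iff_mul_comm.mpr hcomm.symm
    have h2 : QuotientGroup.mk' (paperV G (k + 3)) ⁅d, x⁆ = 1 := by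
      rw [map_commutatorElement]; exact h1
    rwa [← QuotientGroup.ker_mk' (paperV G (k + 3)), MonoidHom.mem_ker]
  -- Step B: paperV G (k+3) is central mod V
  have hVcent : ∀ v ∈ paperV G (k + 3), ∀ q : G ⧸ V, f v * q = q * f v := by
    intro v hv q
    obtain ⟨g, rfl⟩ := QuotientGroup.mk'_surjective V q
    have hvg : ⁅v, g⁆ ∈ V := by
      have : V = ⁅paperV G (k + 3), (⊤ : Subgroup G)⁆ := rfl
      rw [this]
      exact Subgroup.commutator_mem_commutator hv (Subgroup.mem_top g)
    have h1 : ⁅f v, f g⁆ = 1 := by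
      rw [← map_commutatorElement]; exact hmem_one _ hvg
    exact commutatorElement_eq_one_iff_mul_comm.mp h1
  -- Step C: commutator G is abelian mod V
  have habQ : ∀ a ∈ commutator G, ∀ b ∈ commutator G, f a * f b = f b * f a := by
    intro a ha b hb
    have h1 : ⁅f a, f b⁆ = 1 := by
      rw [← map_commutatorElement]; exact hmem_one _ (hab a ha b hb)
    exact commutatorElement_eq_one_iff_mul_comm.mp h1
  -- lcs (k+1) is inside commutator G
  have hlcs_comm : (⊤ : Subgroup G).lowerCentralSeries (k + 1) ≤ commutator G := by
    rw [← top_lowerCentralSeries_one]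
    exact Subgroup.lowerCentralSeries_antitone ⊤ (by omega)
  -- Step D: conclude
  rw [paperD, Subgroup.mem_comap, Subgroup.mem_centralizer_iff]
  intro q hq
  obtain ⟨g, hg, rfl⟩ := hq
  have hgC : g ∈ (Subgroup.centralizer {f d}).comap f := by
    have hle : (⊤ : Subgroup G).lowerCentralSeries (k + 2) ≤ (Subgroup.centralizer {f d}).comap f := by
      rw [show (⊤ : Subgroup G).lowerCentralSeries (k+2) = ⁅(⊤ : Subgroup G).lowerCentralSeries (k+1), (⊤ : Subgroup G)⁆ from rfl,
        Subgroup.commutator_le]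
      intro x hx y _
      rw [Subgroup.mem_comap, Subgroup.mem_centralizer_iff]
      intro m hm
      rw [Set.mem_singleton_iff] at hm
      subst hm
      rw [map_commutatorElement]
      refine keyCommute' (f d) (f x) (f y) ?_ ?_ ?_
      · intro q
        rw [← map_commutatorElement]
        exact hVcent _ (hcent x hx) q
      · have hx' : x ∈ commutator G := hlcs_comm hx
        have hdy : ⁅d, y⁆ ∈ commutator G := by
          rw [_root_.commutator_def]
          exact Subgroup.commutator_mem_commutator (Subgroup.mem_top d) (Subgroup.mem_top y)
        rw [← map_commutatorElement]
        exact habQ x hx' ⁅d, y⁆ hdy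
      · have hdy : ⁅d, y⁆ ∈ commutator G := by
          rw [_root_.commutator_def]
          exact Subgroup.commutator_mem_commutator (Subgroup.mem_top d) (Subgroup.mem_top y)
        have hxy : ⁅x, y⁆ ∈ commutator G := by
          rw [_root_.commutator_def]
          exact Subgroup.commutator_mem_commutator (Subgroup.mem_top x) (Subgroup.mem_top y)
        rw [← map_commutatorElement, ← map_commutatorElement]
        exact habQ ⁅d, y⁆ hdy ⁅x, y⁆ hxy
    exact hle hg
  have := Subgroup.mem_centralizer_iff.mp (Subgroup.mem_comap.mp hgC) (f d) rfl
  exact this.symm
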